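/- Fix y ∈ (0,1) and σ² > 0, and let h : ℝ → (0,1) be a mean-predictor inverse-link map and η₀ ∈ ℝ a point such that h is twice differentiable at η₀. Write μ = h(η₀), and suppose g is a link function that is twice differentiable at μ with g′(μ) ≠ 0 and h′(η₀) = 1/g′(μ), h″(η₀) = −g″(μ)/g′(μ)³ (i.e. h is locally inverse to g). Then the second derivative of the composite map η ↦ ℓ(h(η),σ²;y) at η₀ equals −(1/σ²)·q, where q = { u(y,μ) − (y−μ)·u′(y,μ) + (y−μ)·u(y,μ)·g″(μ)/g′(μ) } / g′(μ)², and u′(y,μ) = −{ 2(y−μ)u(y,μ)/(μ(1−μ)) + 3(1−2μ)/(μ⁴(1−μ)⁴) + (1−2μ)d(y;μ)/(μ²(1−μ)²) }. -/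

import Mathlib

open Real

/-- The unit deviance of the simplex distribution. -/
noncomputable def simplexDev (y μ : ℝ) : ℝ :=
  (y - μ)^2 / (y * (1 - y) * μ^2 * (1 - μ)^2)

/-- The simplex log-likelihood for a single observation. -/
noncomputable def simplexLoglik (μ σ2 y : ℝ) : ℝ :=
  -(1/2) * Real.log (2 * Real.pi) - (1/2) * Real.log σ2
    - (3/2) * Real.log (y * (1 - y)) - simplexDev y μ / (2 * σ2)

/-- The quantity u(y,μ). -/
noncomputable def simplexU (y μ : ℝ) : ℝ :=
  (1 / (μ * (1 - μ))) * (simplexDev y μ + 1 / (μ^2 * (1 - μ)^2))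

/-- The derivative u′(y,μ) of μ ↦ u(y,μ). -/
noncomputable def simplexU' (y μ : ℝ) : ℝ :=
  -(2 * (y - μ) * simplexU y μ / (μ * (1 - μ))
      + 3 * (1 - 2*μ) / (μ^4 * (1 - μ)^4)
      + (1 - 2*μ) * simplexDev y μ / (μ^2 * (1 - μ)^2))

/-! By the chain rule to second order, `(ℓ ∘ h)'' = ∂²ℓ/∂μ² · h'² + ∂ℓ/∂μ · h''`, and the
score is `∂ℓ/∂μ = (y - μ) u(y, μ) / σ²`: indeed `∂d/∂μ = -2 (y - μ) u(y, μ)`, an identity that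
rests on `(y - μ)² + y (1 - y) = μ (1 - μ) + (y - μ) (1 - 2μ)`. Differentiating the score once
more and inserting `h' = 1 / g'`, `h'' = -g'' / g'³` gives `-q / σ²`. -/

open Topology

theorem iteratedDeriv_two_comp {𝕜 : Type*} [NontriviallyNormedField 𝕜] {f f' h : 𝕜 → 𝕜}
    {x a : 𝕜} (hf : ∀ᶠ z in 𝓝 (h x), HasDerivAt f (f' z) z) (hf' : HasDerivAt f' a (h x))
    (hh : ContDiffAt 𝕜 2 h x) :
    iteratedDeriv 2 (f ∘ h) x = a * deriv h x ^ 2 + f' (h x) * deriv (deriv h) x := by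
  have hh' : HasDerivAt (deriv h) (deriv (deriv h) x) x :=
    ((hh.derivWithin (m := 1) (by norm_num)).differentiableAt one_ne_zero).hasDerivAt
  have hderiv : deriv (f ∘ h) =ᶠ[𝓝 x] fun z => f' (h z) * deriv h z := by
    filter_upwards [hh.continuousAt.eventually hf, hh.eventually (by simp)] with z hfz hhz
    exact (hfz.comp z (hhz.differentiableAt two_ne_zero).hasDerivAt).deriv
  have hsecond : HasDerivAt (fun z => f' (h z) * deriv h z)
      (a * deriv h x ^ 2 + f' (h x) * deriv (deriv h) x) x :=
    ((hf'.comp x (hh.differentiableAt two_ne_zero).hasDerivAt).fun_mul hh').congr_deriv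
      (by rw [Function.comp_apply]; ring)
  rw [iteratedDeriv_succ, iteratedDeriv_one, hderiv.deriv_eq, hsecond.deriv]

section

variable {y μ : ℝ}

theorem hasDerivAt_simplexDev (hy₀ : y ≠ 0) (hy₁ : y ≠ 1) (hμ₀ : μ ≠ 0) (hμ₁ : μ ≠ 1) :
    HasDerivAt (simplexDev y) (-2 * (y - μ) * simplexU y μ) μ := by
  have hy₁' : 1 - y ≠ 0 := sub_ne_zero.mpr hy₁.symm
  have hμ₁' : 1 - μ ≠ 0 := sub_ne_zero.mpr hμ₁.symm
  have hden : y * (1 - y) * μ ^ 2 * (1 - μ) ^ 2 ≠ 0 := by positivity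
  have hnum := ((hasDerivAt_id' μ).const_sub y).fun_pow 2
  have hden' := ((hasDerivAt_pow 2 μ).const_mul (y * (1 - y))).fun_mul
    (((hasDerivAt_id' μ).const_sub 1).fun_pow 2)
  refine (hnum.div hden' hden).congr_deriv ?_
  simp only [simplexU, simplexDev]
  field_simp
  ring

theorem hasDerivAt_simplexU (hy₀ : y ≠ 0) (hy₁ : y ≠ 1) (hμ₀ : μ ≠ 0) (hμ₁ : μ ≠ 1) :
    HasDerivAt (simplexU y) (simplexU' y μ) μ := by
  have hw0 : μ * (1 - μ) ≠ 0 := mul_ne_zero hμ₀ (sub_ne_zero.mpr hμ₁.symm)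
  have hw : HasDerivAt (fun s : ℝ => s * (1 - s)) (1 - 2 * μ) μ :=
    ((hasDerivAt_id' μ).fun_mul ((hasDerivAt_id' μ).const_sub 1)).congr_deriv (by ring)
  have hu := (hw.fun_inv hw0).fun_mul ((hasDerivAt_simplexDev hy₀ hy₁ hμ₀ hμ₁).fun_add
    ((hw.fun_pow 2).fun_inv (pow_ne_zero 2 hw0)))
  have hU : simplexU y = fun s => (s * (1 - s))⁻¹ * (simplexDev y s + ((s * (1 - s)) ^ 2)⁻¹) := by
    funext s
    simp only [simplexU, one_div, mul_pow]
  rw [hU]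
  refine hu.congr_deriv ?_
  simp only [simplexU', simplexU]
  field_simp
  ring

theorem hasDerivAt_simplexLoglik (σ2 : ℝ) (hy₀ : y ≠ 0) (hy₁ : y ≠ 1) (hμ₀ : μ ≠ 0)
    (hμ₁ : μ ≠ 1) :
    HasDerivAt (fun m => simplexLoglik m σ2 y) ((y - μ) * simplexU y μ / σ2) μ := by
  refine (((hasDerivAt_simplexDev hy₀ hy₁ hμ₀ hμ₁).div_const (2 * σ2)).const_sub
    (-(1/2) * Real.log (2 * Real.pi) - (1/2) * Real.log σ2 - (3/2) * Real.log (y * (1 - y)))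
    ).congr_deriv ?_
  ring

end

theorem simplexLoglik_comp_iteratedDeriv_two_general (y σ2 : ℝ)
    (hy : y ∈ Set.Ioo (0:ℝ) 1)
    (h g : ℝ → ℝ) (η₀ : ℝ) (hmaps : ∀ x, h x ∈ Set.Ioo (0:ℝ) 1)
    (hh : ContDiffAt ℝ 2 h η₀)
    (μ : ℝ) (hμeq : μ = h η₀)
    (hg' : deriv g μ ≠ 0)
    (hinv1 : deriv h η₀ = 1 / deriv g μ)
    (hinv2 : deriv (deriv h) η₀ = -(deriv (deriv g) μ) / (deriv g μ)^3) :
    iteratedDeriv 2 (fun η => simplexLoglik (h η) σ2 y) η₀ =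
      -(1 / σ2) *
        ((simplexU y μ - (y - μ) * simplexU' y μ
            + (y - μ) * simplexU y μ * deriv (deriv g) μ / deriv g μ)
          / (deriv g μ)^2) := by
  subst hμeq
  obtain ⟨hy₀, hy₁⟩ := hy
  have hscore : ∀ᶠ m in 𝓝 (h η₀),
      HasDerivAt (fun m => simplexLoglik m σ2 y) ((y - m) * simplexU y m / σ2) m := by
    filter_upwards [isOpen_Ioo.mem_nhds (hmaps η₀)] with m ⟨hm₀, hm₁⟩
    exact hasDerivAt_simplexLoglik σ2 hy₀.ne' hy₁.ne hm₀.ne' hm₁.ne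
  have hscore_deriv : HasDerivAt (fun m => (y - m) * simplexU y m / σ2)
      ((-simplexU y (h η₀) + (y - h η₀) * simplexU' y (h η₀)) / σ2) (h η₀) := by
    refine ((((hasDerivAt_id' _).const_sub y).fun_mul
      (hasDerivAt_simplexU hy₀.ne' hy₁.ne (hmaps η₀).1.ne' (hmaps η₀).2.ne)).div_const σ2
      ).congr_deriv ?_
    ring
  rw [show (fun η => simplexLoglik (h η) σ2 y) = (fun m => simplexLoglik m σ2 y) ∘ h from rfl,
    iteratedDeriv_two_comp hscore hscore_deriv hh, hinv1, hinv2]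
  field_simp
  ring

/-- The second derivative of the composite map η ↦ ℓ(h(η),σ²;y) at η₀ equals
−(1/σ²)·q with q the per-observation entry of the matrix Q in the Hessian block
ℓ̈_ββ of the nonlinear simplex regression model. -/
theorem simplexLoglik_comp_iteratedDeriv_two (y σ2 : ℝ)
    (hy : y ∈ Set.Ioo (0:ℝ) 1) (hσ2 : 0 < σ2)
    (h g : ℝ → ℝ) (η₀ : ℝ) (hmaps : ∀ x, h x ∈ Set.Ioo (0:ℝ) 1)
    (hh : ContDiffAt ℝ 2 h η₀)
    (μ : ℝ) (hμeq : μ = h η₀)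
    (hg : ContDiffAt ℝ 2 g μ)
    (hg' : deriv g μ ≠ 0)
    (hinv1 : deriv h η₀ = 1 / deriv g μ)
    (hinv2 : deriv (deriv h) η₀ = -(deriv (deriv g) μ) / (deriv g μ)^3) :
    iteratedDeriv 2 (fun η => simplexLoglik (h η) σ2 y) η₀ =
      -(1 / σ2) *
        ((simplexU y μ - (y - μ) * simplexU' y μ
            + (y - μ) * simplexU y μ * deriv (deriv g) μ / deriv g μ)
          / (deriv g μ)^2) :=
  simplexLoglik_comp_iteratedDeriv_two_general y σ2 hy h g η₀ hmaps hh μ hμeq hg' hinv1 hinv2
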